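/- Let W' be a reflection subgroup of W, let i ∈ {1,2}, and let w ∈ W'. Then the set N_i(w) ∩ Φ̂_i(W') has cardinality exactly ℓ_{W'}(w). Moreover, if w = r_{x_1}⋯r_{x_n} is a reduced expression with respect to S(W') (with x_1, …, x_n ∈ Δ_i(W') and n = ℓ_{W'}(w)), then N_i(w) ∩ Φ̂_i(W') = {ŷ_1, …, ŷ_n}, where y_j = (r_{x_n}⋯r_{x_{j+1}})x_j for j = 1, …, n, and the classes ŷ_1, …, ŷ_n are pairwise distinct. -/

import Mathlib

open Pointwise

/-- The positive linear cone of a subset `A` of a real vector space: finite linear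
combinations of elements of `A` with all coefficients nonnegative and at least one
strictly positive. -/
def PLC {V : Type*} [AddCommGroup V] [Module ℝ V] (A : Set V) : Set V :=
  { v | ∃ c : V →₀ ℝ, (∀ a, 0 ≤ c a) ∧ ↑c.support ⊆ A ∧ c ≠ 0 ∧
          v = c.sum fun a t => t • a }

/-- `altEnd a b m` is the alternating product `⋯ a b a b` … of `m` factors,
ending with `b` (e.g. `altEnd a b 3 = b * a * b`). -/
def altEnd {G : Type*} [Monoid G] : G → G → ℕ → G
  | _, _, 0 => 1
  | a, b, m + 1 => altEnd b a m * b

/-- The class of `z` under the equivalence "being nonzero scalar multiples of each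
other" (the class `ẑ`). -/
def rayClass {V : Type*} [AddCommGroup V] [Module ℝ V] (z : V) : Set V :=
  { v | ∃ c : ℝ, c ≠ 0 ∧ v = c • z }

/-- The set `Â = {ẑ : z ∈ A}` of scalar-equivalence classes of elements of `A`. -/
def rayClasses {V : Type*} [AddCommGroup V] [Module ℝ V] (A : Set V) : Set (Set V) :=
  { C | ∃ z ∈ A, C = rayClass z }

/-- A Coxeter datum `(S, V₁, V₂, Π₁, Π₂, ⟨·,·⟩)` satisfying (D1)–(D5), together with
its associated abstract Coxeter group `W` (a group generated by involutions
`r s`, acting faithfully on `V₁` and `V₂` in the prescribed way, with the pairing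
`W`-invariant), the decomposition `Φᵢ = Φᵢ⁺ ⊎ Φᵢ⁻` of the paired root systems, the
`W`-equivariant bijection `φ : Φ₁ → Φ₂` (with inverse `phiInv`), and the reflections
`r_x ∈ T` attached to the roots `x ∈ Φ₁` (`refl₁`) resp. `y ∈ Φ₂` (`refl₂`). -/
structure CoxeterDatum (S : Type*) (V₁ : Type*) (V₂ : Type*) (W : Type*)
    [AddCommGroup V₁] [Module ℝ V₁] [AddCommGroup V₂] [Module ℝ V₂] [Group W] where
  pair : V₁ →ₗ[ℝ] V₂ →ₗ[ℝ] ℝ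
  α : S → V₁
  β : S → V₂
  α_inj : Function.Injective α
  β_inj : Function.Injective β
  D1 : ∀ s, pair (α s) (β s) = 1
  D2a : (0 : V₁) ∉ PLC (Set.range α)
  D2b : (0 : V₂) ∉ PLC (Set.range β)
  D2c : ∀ s, α s ∉ PLC (Set.range α \ {α s})
  D2d : ∀ s, β s ∉ PLC (Set.range β \ {β s})
  D3 : ∀ s t, s ≠ t → pair (α s) (β t) ≤ 0
  D4 : ∀ s t, pair (α s) (β t) = 0 → pair (α t) (β s) = 0
  D5 : ∀ s t, s ≠ t →
    (∃ m : ℕ, 2 ≤ m ∧ pair (α s) (β t) * pair (α t) (β s) = Real.cos (Real.pi / m) ^ 2) ∨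
      1 ≤ pair (α s) (β t) * pair (α t) (β s)
  /-- the Coxeter generators `R = {r s : s ∈ S}` of `W` -/
  r : S → W
  r_gen : Subgroup.closure (Set.range r) = ⊤
  r_ne_one : ∀ s, r s ≠ 1
  r_sq : ∀ s, r s * r s = 1
  /-- the faithful action of `W` on `V₁` -/
  ρ₁ : W →* Module.End ℝ V₁
  /-- the faithful action of `W` on `V₂` -/
  ρ₂ : W →* Module.End ℝ V₂
  ρ₁_inj : Function.Injective ρ₁
  ρ₂_inj : Function.Injective ρ₂
  hr₁ : ∀ s x, ρ₁ (r s) x = x - (2 * pair x (β s)) • α s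
  hr₂ : ∀ s y, ρ₂ (r s) y = y - (2 * pair (α s) y) • β s
  pair_inv : ∀ w x y, pair (ρ₁ w x) (ρ₂ w y) = pair x y
  /-- the `W`-equivariant bijection `φ : Φ₁ → Φ₂` -/
  phi : V₁ → V₂
  /-- the inverse `φ⁻¹ : Φ₂ → Φ₁` -/
  phiInv : V₂ → V₁
  /-- the reflection `r_x` corresponding to a root `x ∈ Φ₁` -/
  refl₁ : V₁ → W
  /-- the reflection `r_y` corresponding to a root `y ∈ Φ₂` -/
  refl₂ : V₂ → W
  decomp₁ : { v | ∃ w s, v = ρ₁ w (α s) } =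
      ({ v | ∃ w s, v = ρ₁ w (α s) } ∩ PLC (Set.range α)) ∪
        (-({ v | ∃ w s, v = ρ₁ w (α s) } ∩ PLC (Set.range α)))
  disj₁ : Disjoint ({ v | ∃ w s, v = ρ₁ w (α s) } ∩ PLC (Set.range α))
      (-({ v | ∃ w s, v = ρ₁ w (α s) } ∩ PLC (Set.range α)))
  decomp₂ : { v | ∃ w s, v = ρ₂ w (β s) } =
      ({ v | ∃ w s, v = ρ₂ w (β s) } ∩ PLC (Set.range β)) ∪
        (-({ v | ∃ w s, v = ρ₂ w (β s) } ∩ PLC (Set.range β)))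
  disj₂ : Disjoint ({ v | ∃ w s, v = ρ₂ w (β s) } ∩ PLC (Set.range β))
      (-({ v | ∃ w s, v = ρ₂ w (β s) } ∩ PLC (Set.range β)))
  phi_mem : ∀ x ∈ { v | ∃ w s, v = ρ₁ w (α s) }, phi x ∈ { v | ∃ w s, v = ρ₂ w (β s) }
  phiInv_mem : ∀ y ∈ { v | ∃ w s, v = ρ₂ w (β s) }, phiInv y ∈ { v | ∃ w s, v = ρ₁ w (α s) }
  phiInv_phi : ∀ x ∈ { v | ∃ w s, v = ρ₁ w (α s) }, phiInv (phi x) = x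
  phi_phiInv : ∀ y ∈ { v | ∃ w s, v = ρ₂ w (β s) }, phi (phiInv y) = y
  phi_simple : ∀ s, phi (α s) = β s
  phi_equiv : ∀ w, ∀ x ∈ { v | ∃ w s, v = ρ₁ w (α s) }, phi (ρ₁ w x) = ρ₂ w (phi x)
  refl₁_eq : ∀ w s, refl₁ (ρ₁ w (α s)) = w * r s * w⁻¹
  refl₂_eq : ∀ w s, refl₂ (ρ₂ w (β s)) = w * r s * w⁻¹
  refl₁_act : ∀ x ∈ { v | ∃ w s, v = ρ₁ w (α s) }, ∀ v,
      ρ₁ (refl₁ x) v = v - (2 * pair v (phi x)) • x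
  refl₂_act : ∀ y ∈ { v | ∃ w s, v = ρ₂ w (β s) }, ∀ v,
      ρ₂ (refl₂ y) v = v - (2 * pair (phiInv y) v) • y

namespace CoxeterDatum

variable {S V₁ V₂ W : Type*} [AddCommGroup V₁] [Module ℝ V₁]
  [AddCommGroup V₂] [Module ℝ V₂] [Group W]

variable (D : CoxeterDatum S V₁ V₂ W)

/-- The root system `Φ₁ = W Π₁`. -/
def Phi₁ : Set V₁ := { v | ∃ w s, v = D.ρ₁ w (D.α s) }

/-- The root system `Φ₂ = W Π₂`. -/
def Phi₂ : Set V₂ := { v | ∃ w s, v = D.ρ₂ w (D.β s) }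

/-- The positive roots `Φ₁⁺ = Φ₁ ∩ PLC Π₁`. -/
def PhiPos₁ : Set V₁ := D.Phi₁ ∩ PLC (Set.range D.α)

/-- The positive roots `Φ₂⁺ = Φ₂ ∩ PLC Π₂`. -/
def PhiPos₂ : Set V₂ := D.Phi₂ ∩ PLC (Set.range D.β)

/-- The negative roots `Φ₁⁻ = -Φ₁⁺`. -/
def PhiNeg₁ : Set V₁ := -D.PhiPos₁

/-- The negative roots `Φ₂⁻ = -Φ₂⁺`. -/
def PhiNeg₂ : Set V₂ := -D.PhiPos₂

/-- The set `T = ⋃_{w ∈ W} w R w⁻¹` of reflections of `W`. -/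
def T : Set W := { t | ∃ w s, t = w * D.r s * w⁻¹ }

/-- The length function `ℓ` of `W` with respect to the Coxeter generators `R`. -/
noncomputable def len (w : W) : ℕ :=
  sInf { n | ∃ l : List S, l.length = n ∧ (l.map D.r).prod = w }

/-- `N̄ w = {t ∈ T : ℓ(w t) < ℓ(w)}`. -/
noncomputable def Nbar (w : W) : Set W :=
  { t | t ∈ D.T ∧ D.len (w * t) < D.len w }

/-- `N₁ w = {ẑ : z ∈ Φ₁⁺, w z ∈ Φ₁⁻}`. -/
def N₁ (w : W) : Set (Set V₁) :=
  { C | ∃ z, z ∈ D.PhiPos₁ ∧ D.ρ₁ w z ∈ D.PhiNeg₁ ∧ C = rayClass z }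

/-- `N₂ w = {ẑ : z ∈ Φ₂⁺, w z ∈ Φ₂⁻}`. -/
def N₂ (w : W) : Set (Set V₂) :=
  { C | ∃ z, z ∈ D.PhiPos₂ ∧ D.ρ₂ w z ∈ D.PhiNeg₂ ∧ C = rayClass z }

/-- A subgroup `W'` of `W` is a reflection subgroup when `W' = ⟨W' ∩ T⟩`. -/
def IsReflectionSubgroup (W' : Subgroup W) : Prop :=
  W' = Subgroup.closure ((W' : Set W) ∩ D.T)

/-- `Φ₁(W') = {x ∈ Φ₁ : r_x ∈ W'}`. -/
def PhiSub₁ (W' : Subgroup W) : Set V₁ :=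
  { x | x ∈ D.Phi₁ ∧ D.refl₁ x ∈ W' }

/-- `Φ₂(W') = {y ∈ Φ₂ : r_y ∈ W'}`. -/
def PhiSub₂ (W' : Subgroup W) : Set V₂ :=
  { y | y ∈ D.Phi₂ ∧ D.refl₂ y ∈ W' }

/-- The canonical generators `S(W') = {t ∈ T : N̄(t) ∩ W' = {t}}`. -/
noncomputable def SW (W' : Subgroup W) : Set W :=
  { t | t ∈ D.T ∧ D.Nbar t ∩ (W' : Set W) = {t} }

/-- `Δ₁(W') = {x ∈ Φ₁⁺ : r_x ∈ S(W')}`. -/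
noncomputable def Delta₁ (W' : Subgroup W) : Set V₁ :=
  { x | x ∈ D.PhiPos₁ ∧ D.refl₁ x ∈ D.SW W' }

/-- `Δ₂(W') = {y ∈ Φ₂⁺ : r_y ∈ S(W')}`. -/
noncomputable def Delta₂ (W' : Subgroup W) : Set V₂ :=
  { y | y ∈ D.PhiPos₂ ∧ D.refl₂ y ∈ D.SW W' }

/-- The length function `ℓ_{W'}` of a reflection subgroup `W'` with respect to its
canonical generators `S(W')`. -/
noncomputable def lenIn (W' : Subgroup W) (w : W) : ℕ :=
  sInf { n | ∃ l : List W, l.length = n ∧ (∀ t ∈ l, t ∈ D.SW W') ∧ l.prod = w }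

end CoxeterDatum

/-!
A canonical generator `r_x` of `W'` (with `x ∈ Δ₁(W')`) sends every positive root `z ∉ ℝx`
with `r_z ∈ W'` to a positive root, because `N̄(r_x) ∩ W' = {r_x}`. Hence, if `w = u r_x` with
`ℓ_{W'}(w) = ℓ_{W'}(u) + 1`, then `u x > 0` by the exchange condition relative to `S(W')`, and
`N₁(w) ∩ Φ̂₁(W')` is the disjoint union of `r_x (N₁(u) ∩ Φ̂₁(W'))` and `{x̂}`. Induction along a
reduced word gives the description, hence the count. Reduced words exist because `S(W')`
generates `W'` (Dyer); this is proved by induction on the depth of roots, starting from the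
simple root lemma, which is where (D2) enters. The case `i = 2` is the case `i = 1` for the dual
datum, which swaps `V₁` and `V₂`.
-/

section RayClass

variable {V V' : Type*} [AddCommGroup V] [Module ℝ V] [AddCommGroup V'] [Module ℝ V']

lemma mem_rayClass_self (z : V) : z ∈ rayClass z := ⟨1, one_ne_zero, (one_smul ℝ z).symm⟩

lemma rayClass_smul {c : ℝ} (hc : c ≠ 0) (z : V) : rayClass (c • z) = rayClass z := by
  ext v
  constructor
  · rintro ⟨c', hc', rfl⟩
    exact ⟨c' * c, mul_ne_zero hc' hc, by rw [smul_smul]⟩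
  · rintro ⟨c', hc', rfl⟩
    exact ⟨c' * c⁻¹, mul_ne_zero hc' (inv_ne_zero hc), by
      rw [smul_smul, mul_assoc, inv_mul_cancel₀ hc, mul_one]⟩

lemma rayClass_neg (z : V) : rayClass (-z) = rayClass z := by
  rw [← neg_one_smul ℝ z]
  exact rayClass_smul (by norm_num) z

lemma exists_eq_smul_of_rayClass_eq {v z : V} (h : rayClass v = rayClass z) :
    ∃ c : ℝ, c ≠ 0 ∧ v = c • z :=
  (h ▸ mem_rayClass_self v : v ∈ rayClass z)

lemma LinearMap.image_rayClass (f : V →ₗ[ℝ] V') (z : V) : f '' rayClass z = rayClass (f z) := by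
  ext v
  simp only [rayClass, Set.mem_image, Set.mem_ofPred_eq]
  constructor
  · rintro ⟨_, ⟨c, hc, rfl⟩, rfl⟩
    exact ⟨c, hc, map_smul f c z⟩
  · rintro ⟨c, hc, rfl⟩
    exact ⟨c • z, ⟨c, hc, rfl⟩, map_smul f c z⟩

end RayClass

section PositiveCone

variable {V : Type*} [AddCommGroup V] [Module ℝ V] {A : Set V} {u v a : V}

lemma PLC_mono {B : Set V} (h : A ⊆ B) : PLC A ⊆ PLC B := by
  rintro _ ⟨c, hc, hs, hc0, rfl⟩
  exact ⟨c, hc, hs.trans h, hc0, rfl⟩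

lemma add_mem_PLC (hu : u ∈ PLC A) (hv : v ∈ PLC A) : u + v ∈ PLC A := by
  classical
  obtain ⟨c₁, hc₁, hs₁, hc₁0, rfl⟩ := hu
  obtain ⟨c₂, hc₂, hs₂, -, rfl⟩ := hv
  refine ⟨c₁ + c₂, fun b => add_nonneg (hc₁ b) (hc₂ b), ?_, ?_, ?_⟩
  · intro b hb
    rcases Finset.mem_union.mp (Finsupp.support_add hb) with h | h
    exacts [hs₁ h, hs₂ h]
  · obtain ⟨b, hb⟩ := Finsupp.ne_iff.mp hc₁0
    intro h
    have := DFunLike.congr_fun h b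
    simp only [Finsupp.coe_add, Pi.add_apply, Finsupp.coe_zero, Pi.zero_apply] at this hb
    linarith [hc₁ b, hc₂ b, lt_of_le_of_ne (hc₁ b) (Ne.symm hb)]
  · exact (Finsupp.sum_add_index' (fun b => zero_smul ℝ b) fun b t₁ t₂ => add_smul t₁ t₂ b).symm

lemma smul_mem_PLC {c : ℝ} (hc : 0 < c) (hv : v ∈ PLC A) : c • v ∈ PLC A := by
  obtain ⟨d, hd, hs, hd0, rfl⟩ := hv
  refine ⟨c • d, fun b => mul_nonneg hc.le (hd b), ?_, smul_ne_zero hc.ne' hd0, ?_⟩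
  · exact (Finset.coe_subset.mpr (Finsupp.support_smul)).trans hs
  · rw [Finsupp.sum_smul_index (fun b => zero_smul ℝ b), Finsupp.smul_sum]
    simp only [smul_smul]

lemma smul_mem_PLC_of_mem {c : ℝ} (ha : a ∈ A) (hc : 0 < c) : c • a ∈ PLC A := by
  classical
  refine ⟨Finsupp.single a c, fun b => ?_, ?_, by simpa using hc.ne', ?_⟩
  · rw [Finsupp.single_apply]
    split_ifs <;> simp [hc.le]
  · exact (Finset.coe_subset.mpr Finsupp.support_single_subset).trans (by simpa using ha)
  · rw [Finsupp.sum_single_index (zero_smul ℝ a)]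

private lemma finsupp_sum_eq_erase_add (c : V →₀ ℝ) (a : V) :
    c.sum (fun b t => t • b) = (c.erase a).sum (fun b t => t • b) + c a • a := by
  classical
  conv_lhs => rw [← Finsupp.erase_add_single a c]
  rw [Finsupp.sum_add_index' (fun b => zero_smul ℝ b) (fun b t₁ t₂ => add_smul t₁ t₂ b),
    Finsupp.sum_single_index (zero_smul ℝ a)]

private lemma erase_sum_mem_PLC_sdiff {c : V →₀ ℝ} (hc : ∀ b, 0 ≤ c b) (hs : ↑c.support ⊆ A)
    (hc₀ : c.erase a ≠ 0) : (c.erase a).sum (fun b t => t • b) ∈ PLC (A \ {a}) := by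
  classical
  refine ⟨c.erase a, fun b => ?_, fun b hb => ?_, hc₀, rfl⟩
  · by_cases hb : b = a
    · simp [hb]
    · rw [Finsupp.erase_ne hb]; exact hc b
  · have hb' := Finset.mem_coe.mp hb
    rw [Finsupp.support_erase, Finset.mem_erase] at hb'
    exact ⟨hs hb'.2, hb'.1⟩

lemma exists_eq_smul_of_add_eq_smul (h0 : (0 : V) ∉ PLC A) (ha : a ∈ A)
    (ha' : a ∉ PLC (A \ {a})) (hu : u ∈ PLC A) (hv : v ∈ PLC A) {d : ℝ}
    (huv : u + v = d • a) : ∃ c : ℝ, u = c • a := by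
  classical
  obtain ⟨c₁, hc₁, hs₁, -, rfl⟩ := hu
  obtain ⟨c₂, hc₂, hs₂, -, rfl⟩ := hv
  set c := c₁ + c₂ with hc_def
  have hc : ∀ b, 0 ≤ c b := fun b => add_nonneg (hc₁ b) (hc₂ b)
  have hsum : (c.erase a).sum (fun b t => t • b) = (d - c a) • a := by
    have := finsupp_sum_eq_erase_add c a
    rw [hc_def, Finsupp.sum_add_index' (fun b => zero_smul ℝ b)
      (fun b t₁ t₂ => add_smul t₁ t₂ b), huv] at this
    rw [sub_smul, this, add_sub_cancel_right]
  by_cases hc₀ : c.erase a = 0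
  · refine ⟨c₁ a, ?_⟩
    have hc₁₀ : c₁.erase a = 0 := by
      ext b
      by_cases hb : b = a
      · simp [hb]
      · have := DFunLike.congr_fun hc₀ b
        simp only [Finsupp.erase_ne hb, hc_def, Finsupp.coe_add, Pi.add_apply,
          Finsupp.coe_zero, Pi.zero_apply] at this
        simp only [Finsupp.erase_ne hb, Finsupp.coe_zero, Pi.zero_apply]
        linarith [hc₁ b, hc₂ b]
    rw [finsupp_sum_eq_erase_add c₁ a, hc₁₀, Finsupp.sum_zero_index, zero_add]
  · exfalso
    have hs : ↑c.support ⊆ A := fun b hb =>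
      (Finset.mem_union.mp (Finsupp.support_add hb)).elim (fun h => hs₁ h) (fun h => hs₂ h)
    have hmem := erase_sum_mem_PLC_sdiff hc hs hc₀
    rw [hsum] at hmem
    rcases lt_trichotomy (d - c a) 0 with h | h | h
    · apply h0
      have := add_mem_PLC (PLC_mono Set.sdiff_subset hmem) (smul_mem_PLC_of_mem ha (neg_pos.2 h))
      rwa [← add_smul, add_neg_cancel, zero_smul] at this
    · rw [h, zero_smul] at hmem
      exact h0 (PLC_mono Set.sdiff_subset hmem)
    · apply ha'
      simpa [smul_smul, inv_mul_cancel₀ h.ne'] using smul_mem_PLC (inv_pos.2 h) hmem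

end PositiveCone

namespace CoxeterDatum

variable {S V₁ V₂ W : Type*} [AddCommGroup V₁] [Module ℝ V₁]
  [AddCommGroup V₂] [Module ℝ V₂] [Group W] (D : CoxeterDatum S V₁ V₂ W)

section Roots

lemma ρ₁_mul_apply (a b : W) (v : V₁) : D.ρ₁ (a * b) v = D.ρ₁ a (D.ρ₁ b v) := by
  rw [map_mul]; rfl

lemma ρ₁_one_apply (v : V₁) : D.ρ₁ 1 v = v := by
  rw [map_one]; rfl

lemma ρ₂_mul_apply (a b : W) (v : V₂) : D.ρ₂ (a * b) v = D.ρ₂ a (D.ρ₂ b v) := by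
  rw [map_mul]; rfl

lemma ρ₁_inv_apply_ρ₁ (w : W) (v : V₁) : D.ρ₁ w⁻¹ (D.ρ₁ w v) = v := by
  rw [← ρ₁_mul_apply, inv_mul_cancel, ρ₁_one_apply]

lemma ρ₁_injective (w : W) : Function.Injective (D.ρ₁ w) :=
  Function.LeftInverse.injective (D.ρ₁_inv_apply_ρ₁ w)

lemma α_mem_Phi₁ (s : S) : D.α s ∈ D.Phi₁ := ⟨1, s, by rw [ρ₁_one_apply]⟩

lemma ρ₁_mem_Phi₁ {x : V₁} (hx : x ∈ D.Phi₁) (w : W) : D.ρ₁ w x ∈ D.Phi₁ := by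
  obtain ⟨u, s, rfl⟩ := hx
  exact ⟨w * u, s, by rw [ρ₁_mul_apply]⟩

lemma phiInv_ρ₂ (w : W) {y : V₂} (hy : y ∈ D.Phi₂) :
    D.phiInv (D.ρ₂ w y) = D.ρ₁ w (D.phiInv y) := by
  have hx : D.phiInv y ∈ D.Phi₁ := D.phiInv_mem y hy
  have h : D.phi (D.ρ₁ w (D.phiInv y)) = D.ρ₂ w y := by
    rw [D.phi_equiv w _ hx, D.phi_phiInv y hy]
  rw [← h, D.phiInv_phi _ (D.ρ₁_mem_Phi₁ hx w)]

lemma phi_ρ₁_α (w : W) (s : S) : D.phi (D.ρ₁ w (D.α s)) = D.ρ₂ w (D.β s) := by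
  rw [D.phi_equiv w _ (D.α_mem_Phi₁ s), D.phi_simple]

lemma pair_phi_self {x : V₁} (hx : x ∈ D.Phi₁) : D.pair x (D.phi x) = 1 := by
  obtain ⟨w, s, rfl⟩ := hx
  rw [phi_ρ₁_α, D.pair_inv, D.D1]

lemma ne_zero_of_mem_Phi₁ {x : V₁} (hx : x ∈ D.Phi₁) : x ≠ 0 := by
  rintro rfl
  simpa using D.pair_phi_self hx

lemma refl₁_α (s : S) : D.refl₁ (D.α s) = D.r s := by
  simpa [ρ₁_one_apply] using D.refl₁_eq 1 s

lemma ρ₁_r_α (s : S) : D.ρ₁ (D.r s) (D.α s) = -D.α s := by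
  rw [D.hr₁, D.D1, mul_one, two_smul]; abel

lemma ρ₂_r_β (s : S) : D.ρ₂ (D.r s) (D.β s) = -D.β s := by
  rw [D.hr₂, D.D1, mul_one, two_smul]; abel

lemma neg_ρ₁_α (w : W) (s : S) : -D.ρ₁ w (D.α s) = D.ρ₁ (w * D.r s) (D.α s) := by
  rw [ρ₁_mul_apply, ρ₁_r_α, map_neg]

lemma neg_mem_Phi₁ {x : V₁} (hx : x ∈ D.Phi₁) : -x ∈ D.Phi₁ := by
  obtain ⟨w, s, rfl⟩ := hx
  exact ⟨w * D.r s, s, D.neg_ρ₁_α w s⟩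

lemma phi_neg {x : V₁} (hx : x ∈ D.Phi₁) : D.phi (-x) = -D.phi x := by
  obtain ⟨w, s, rfl⟩ := hx
  rw [neg_ρ₁_α, phi_ρ₁_α, phi_ρ₁_α, ρ₂_mul_apply, ρ₂_r_β, map_neg]

lemma refl₁_ρ₁ {x : V₁} (hx : x ∈ D.Phi₁) (w : W) :
    D.refl₁ (D.ρ₁ w x) = w * D.refl₁ x * w⁻¹ := by
  obtain ⟨u, s, rfl⟩ := hx
  rw [← ρ₁_mul_apply, D.refl₁_eq, D.refl₁_eq]
  group

lemma ρ₁_refl₁_self {x : V₁} (hx : x ∈ D.Phi₁) : D.ρ₁ (D.refl₁ x) x = -x := by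
  rw [D.refl₁_act x hx x, D.pair_phi_self hx, mul_one, two_smul]; abel

lemma refl₁_mul_self {x : V₁} (hx : x ∈ D.Phi₁) : D.refl₁ x * D.refl₁ x = 1 := by
  obtain ⟨u, s, rfl⟩ := hx
  rw [D.refl₁_eq, show u * D.r s * u⁻¹ * (u * D.r s * u⁻¹) = u * (D.r s * D.r s) * u⁻¹ by group,
    D.r_sq, mul_one, mul_inv_cancel]

lemma refl₁_inv {x : V₁} (hx : x ∈ D.Phi₁) : (D.refl₁ x)⁻¹ = D.refl₁ x :=
  inv_eq_of_mul_eq_one_right (D.refl₁_mul_self hx)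

lemma ρ₁_refl₁_ρ₁_refl₁ {x : V₁} (hx : x ∈ D.Phi₁) (v : V₁) :
    D.ρ₁ (D.refl₁ x) (D.ρ₁ (D.refl₁ x) v) = v := by
  rw [← ρ₁_mul_apply, D.refl₁_mul_self hx, ρ₁_one_apply]

lemma refl₁_ne_one {x : V₁} (hx : x ∈ D.Phi₁) : D.refl₁ x ≠ 1 := by
  intro h
  have h2 := D.ρ₁_refl₁_self hx
  rw [h, ρ₁_one_apply, eq_neg_iff_add_eq_zero, ← two_smul ℝ, smul_eq_zero] at h2
  exact D.ne_zero_of_mem_Phi₁ hx (h2.resolve_left two_ne_zero)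

lemma refl₁_mem_T {x : V₁} (hx : x ∈ D.Phi₁) : D.refl₁ x ∈ D.T := by
  obtain ⟨u, s, rfl⟩ := hx
  exact ⟨u, s, D.refl₁_eq u s⟩

lemma refl₁_mem_of_mem {W' : Subgroup W} {x : V₁} (hx : x ∈ D.Phi₁) {g : W} (hg : g ∈ W')
    (hxW : D.refl₁ x ∈ W') : D.refl₁ (D.ρ₁ g x) ∈ W' := by
  rw [D.refl₁_ρ₁ hx]
  exact W'.mul_mem (W'.mul_mem hg hxW) (W'.inv_mem hg)

lemma phi_smul {z : V₁} (hz : z ∈ D.Phi₁) {c : ℝ} (hc : c ≠ 0) (hcz : c • z ∈ D.Phi₁) :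
    D.phi (c • z) = c⁻¹ • D.phi z := by
  have ht_z : D.ρ₁ (D.refl₁ (c • z)) z = -z := by
    have h := D.ρ₁_refl₁_self hcz
    rw [map_smul, ← smul_neg] at h
    exact smul_right_injective V₁ hc h
  have ht_phi : D.ρ₂ (D.refl₁ (c • z)) (D.phi z) = -D.phi z := by
    rw [← D.phi_neg hz, ← ht_z, D.phi_equiv _ z hz]
  have ht₂ : D.refl₂ (D.phi (c • z)) = D.refl₁ (c • z) := by
    obtain ⟨u, s, hcu⟩ := hcz
    rw [hcu, D.refl₁_eq, phi_ρ₁_α, D.refl₂_eq]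
  have hact := D.refl₂_act (D.phi (c • z)) (D.phi_mem _ hcz) (D.phi z)
  rw [ht₂, ht_phi, D.phiInv_phi _ hcz, map_smul, LinearMap.smul_apply, smul_eq_mul,
    D.pair_phi_self hz, mul_one] at hact
  have h2 : (2 : ℝ) • (c • D.phi (c • z)) = (2 : ℝ) • D.phi z := by
    linear_combination (norm := module) hact
  rw [← smul_right_injective V₂ two_ne_zero h2, smul_smul, inv_mul_cancel₀ hc, one_smul]

lemma refl₁_smul {z : V₁} (hz : z ∈ D.Phi₁) {c : ℝ} (hcz : c • z ∈ D.Phi₁) :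
    D.refl₁ (c • z) = D.refl₁ z := by
  have hc : c ≠ 0 := by
    rintro rfl
    exact D.ne_zero_of_mem_Phi₁ hcz (zero_smul ℝ z)
  refine D.ρ₁_inj (LinearMap.ext fun v => ?_)
  rw [D.refl₁_act _ hcz v, D.refl₁_act _ hz v, D.phi_smul hz hc hcz, map_smul, smul_eq_mul,
    smul_smul]
  congr 2
  field_simp

lemma refl₁_neg {z : V₁} (hz : z ∈ D.Phi₁) : D.refl₁ (-z) = D.refl₁ z := by
  rw [← neg_one_smul ℝ z]
  exact D.refl₁_smul hz (by rw [neg_one_smul]; exact D.neg_mem_Phi₁ hz)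

lemma exists_eq_smul_of_refl₁_eq {z x : V₁} (hz : z ∈ D.Phi₁) (hx : x ∈ D.Phi₁)
    (h : D.refl₁ z = D.refl₁ x) : ∃ c : ℝ, z = c • x := by
  have h1 : D.ρ₁ (D.refl₁ x) z = -z := by rw [← h, D.ρ₁_refl₁_self hz]
  rw [D.refl₁_act x hx z] at h1
  refine ⟨D.pair z (D.phi x), ?_⟩
  have h2 : (2 : ℝ) • z = (2 : ℝ) • (D.pair z (D.phi x) • x) := by
    linear_combination (norm := module) h1
  exact smul_right_injective V₁ two_ne_zero h2

lemma ρ₁_refl₁_ρ₁_apply {x : V₁} (hx : x ∈ D.Phi₁) (g : W) (v : V₁) :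
    D.ρ₁ (D.refl₁ (D.ρ₁ g x)) (D.ρ₁ g v) = D.ρ₁ g (D.ρ₁ (D.refl₁ x) v) := by
  rw [D.refl₁_ρ₁ hx, ρ₁_mul_apply, ρ₁_mul_apply, ρ₁_inv_apply_ρ₁]

lemma ρ₁_ne_smul {z x : V₁} (hnp : ∀ c : ℝ, z ≠ c • x) (g : W) :
    ∀ c : ℝ, D.ρ₁ g z ≠ c • D.ρ₁ g x :=
  fun c hc => hnp c (D.ρ₁_injective g (by rw [hc, map_smul]))

lemma refl₁_eq_r_of_eq_smul_α {x : V₁} (hx : x ∈ D.Phi₁) {c : ℝ} {s : S}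
    (h : x = c • D.α s) : D.refl₁ x = D.r s := by
  rw [h, D.refl₁_smul (D.α_mem_Phi₁ s) (h ▸ hx), refl₁_α]

end Roots

section Positivity

lemma mem_PhiPos₁_or_mem_PhiNeg₁ {z : V₁} (hz : z ∈ D.Phi₁) :
    z ∈ D.PhiPos₁ ∨ z ∈ D.PhiNeg₁ := by
  have h := hz
  rw [Phi₁, D.decomp₁] at h
  exact h

lemma notMem_PhiNeg₁ {z : V₁} (hz : z ∈ D.PhiPos₁) : z ∉ D.PhiNeg₁ :=
  Set.disjoint_left.mp D.disj₁ hz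

lemma mem_PhiNeg₁_iff {z : V₁} : z ∈ D.PhiNeg₁ ↔ -z ∈ D.PhiPos₁ := Set.mem_neg

lemma neg_mem_PhiNeg₁ {z : V₁} (hz : z ∈ D.PhiPos₁) : -z ∈ D.PhiNeg₁ := by
  rwa [mem_PhiNeg₁_iff, neg_neg]

lemma α_mem_PhiPos₁ (s : S) : D.α s ∈ D.PhiPos₁ :=
  ⟨D.α_mem_Phi₁ s, by simpa using smul_mem_PLC_of_mem (A := Set.range D.α) ⟨s, rfl⟩ one_pos⟩

lemma smul_mem_PhiPos₁ {z : V₁} (hz : z ∈ D.PhiPos₁) {c : ℝ} (hc : 0 < c)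
    (hcz : c • z ∈ D.Phi₁) : c • z ∈ D.PhiPos₁ :=
  ⟨hcz, smul_mem_PLC hc hz.2⟩

lemma smul_mem_PhiPos₁_iff {v : V₁} (hv : v ∈ D.Phi₁) {c : ℝ} (hc : 0 < c)
    (hcv : c • v ∈ D.Phi₁) : c • v ∈ D.PhiPos₁ ↔ v ∈ D.PhiPos₁ := by
  refine ⟨fun h => ?_, fun h => D.smul_mem_PhiPos₁ h hc hcv⟩
  simpa [smul_smul, inv_mul_cancel₀ hc.ne'] using
    D.smul_mem_PhiPos₁ h (inv_pos.2 hc) (by simpa [smul_smul, inv_mul_cancel₀ hc.ne'] using hv)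

lemma smul_mem_PhiNeg₁_iff {v : V₁} (hv : v ∈ D.Phi₁) {c : ℝ} (hc : 0 < c)
    (hcv : c • v ∈ D.Phi₁) : c • v ∈ D.PhiNeg₁ ↔ v ∈ D.PhiNeg₁ := by
  rw [mem_PhiNeg₁_iff, mem_PhiNeg₁_iff, ← smul_neg]
  exact D.smul_mem_PhiPos₁_iff (D.neg_mem_Phi₁ hv) hc (by rw [smul_neg]; exact D.neg_mem_Phi₁ hcv)

lemma pos_of_smul_mem_PhiPos₁ {z : V₁} (hz : z ∈ D.PhiPos₁) {c : ℝ}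
    (hcz : c • z ∈ D.PhiPos₁) : 0 < c := by
  rcases lt_trichotomy c 0 with h | rfl | h
  · refine absurd ?_ (D.notMem_PhiNeg₁ hcz)
    rw [mem_PhiNeg₁_iff, ← neg_smul]
    exact D.smul_mem_PhiPos₁ hz (neg_pos.2 h) (by rw [neg_smul]; exact D.neg_mem_Phi₁ hcz.1)
  · exact absurd (zero_smul ℝ z) (D.ne_zero_of_mem_Phi₁ hcz.1)
  · exact h

/-- The simple root lemma. The roots `z` and `-(rₛ z)` are positive and add up to a multiple
of `αₛ`; by (D2) this forces `z ∈ ℝαₛ`. -/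
lemma ρ₁_r_mem_PhiPos₁ {z : V₁} (hz : z ∈ D.PhiPos₁) (s : S)
    (hnp : ∀ c : ℝ, z ≠ c • D.α s) : D.ρ₁ (D.r s) z ∈ D.PhiPos₁ := by
  refine (D.mem_PhiPos₁_or_mem_PhiNeg₁ (D.ρ₁_mem_Phi₁ hz.1 _)).resolve_right fun h => ?_
  obtain ⟨c, hc⟩ := exists_eq_smul_of_add_eq_smul D.D2a ⟨s, rfl⟩ (D.D2c s) hz.2
    (D.mem_PhiNeg₁_iff.mp h).2 (by rw [D.hr₁]; abel)
  exact hnp c hc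

lemma exists_eq_smul_α_of_ρ₁_r_mem_PhiNeg₁ {z : V₁} (hz : z ∈ D.PhiPos₁) (s : S)
    (hneg : D.ρ₁ (D.r s) z ∈ D.PhiNeg₁) : ∃ c : ℝ, z = c • D.α s := by
  by_contra! hnp
  exact D.notMem_PhiNeg₁ (D.ρ₁_r_mem_PhiPos₁ hz s hnp) hneg

lemma ρ₁_refl₁_notMem_PhiNeg₁_of_eq_smul_α {x z : V₁} (hx : x ∈ D.Phi₁) {c : ℝ} {s : S}
    (hxs : x = c • D.α s) (hz : z ∈ D.PhiPos₁) (hnp : ∀ c : ℝ, z ≠ c • x) :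
    D.ρ₁ (D.refl₁ x) z ∉ D.PhiNeg₁ := by
  intro hneg
  rw [D.refl₁_eq_r_of_eq_smul_α hx hxs] at hneg
  obtain ⟨c', hzs⟩ := D.exists_eq_smul_α_of_ρ₁_r_mem_PhiNeg₁ hz s hneg
  obtain ⟨c'', h⟩ := D.exists_eq_smul_of_refl₁_eq hz.1 hx
    (by rw [D.refl₁_eq_r_of_eq_smul_α hz.1 hzs, D.refl₁_eq_r_of_eq_smul_α hx hxs])
  exact hnp c'' h

end Positivity

section Length

lemma r_inv (s : S) : (D.r s)⁻¹ = D.r s :=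
  inv_eq_of_mul_eq_one_right (D.r_sq s)

lemma exists_word (w : W) : ∃ l : List S, (l.map D.r).prod = w := by
  have hw : w ∈ Subgroup.closure (Set.range D.r) := D.r_gen ▸ Subgroup.mem_top w
  induction hw using Subgroup.closure_induction with
  | mem x hx =>
    obtain ⟨s, rfl⟩ := hx
    exact ⟨[s], by simp⟩
  | one => exact ⟨[], by simp⟩
  | mul x y _ _ hx hy =>
    obtain ⟨l₁, rfl⟩ := hx
    obtain ⟨l₂, rfl⟩ := hy
    exact ⟨l₁ ++ l₂, by simp⟩
  | inv x _ hx =>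
    obtain ⟨l, rfl⟩ := hx
    exact ⟨l.reverse, by simp [List.prod_inv_reverse, Function.comp_def, D.r_inv]⟩

lemma len_le {w : W} (l : List S) (h : (l.map D.r).prod = w) : D.len w ≤ l.length :=
  Nat.sInf_le ⟨l, rfl, h⟩

lemma exists_word_length_eq_len (w : W) :
    ∃ l : List S, l.length = D.len w ∧ (l.map D.r).prod = w := by
  obtain ⟨l, h⟩ := D.exists_word w
  have hne : {n | ∃ l : List S, l.length = n ∧ (l.map D.r).prod = w}.Nonempty :=
    ⟨l.length, l, rfl, h⟩
  exact Nat.sInf_mem hne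

lemma len_one : D.len 1 = 0 :=
  Nat.le_zero.mp (D.len_le [] rfl)

lemma eq_one_of_len_eq_zero {w : W} (h : D.len w = 0) : w = 1 := by
  obtain ⟨l, hl, rfl⟩ := D.exists_word_length_eq_len w
  rw [h, List.length_eq_zero_iff] at hl
  simp [hl]

/-- The strong exchange condition. -/
lemma exists_eraseIdx_prod_eq_mul_refl₁ (l : List S) {z : V₁} (hz : z ∈ D.PhiPos₁)
    (hneg : D.ρ₁ (l.map D.r).prod z ∈ D.PhiNeg₁) :
    ∃ j < l.length, ((l.eraseIdx j).map D.r).prod = (l.map D.r).prod * D.refl₁ z := by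
  induction l with
  | nil =>
    simp only [List.map_nil, List.prod_nil, ρ₁_one_apply] at hneg
    exact absurd hneg (D.notMem_PhiNeg₁ hz)
  | cons s l ih =>
    simp only [List.map_cons, List.prod_cons, ρ₁_mul_apply] at hneg ⊢
    set u := (l.map D.r).prod
    rcases D.mem_PhiPos₁_or_mem_PhiNeg₁ (D.ρ₁_mem_Phi₁ hz.1 u) with hp | hn
    · obtain ⟨c, hc⟩ := D.exists_eq_smul_α_of_ρ₁_r_mem_PhiNeg₁ hp s hneg
      have hrefl : u * D.refl₁ z * u⁻¹ = D.r s := by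
        rw [← D.refl₁_ρ₁ hz.1, hc, D.refl₁_smul (D.α_mem_Phi₁ s)
          (hc ▸ D.ρ₁_mem_Phi₁ hz.1 u), refl₁_α]
      refine ⟨0, by simp, ?_⟩
      rw [List.eraseIdx_cons_zero, show D.r s * u * D.refl₁ z = D.r s * (u * D.refl₁ z * u⁻¹) * u
        by group, hrefl, D.r_sq, one_mul]
    · obtain ⟨j, hj, hje⟩ := ih hn
      exact ⟨j + 1, by simpa using hj, by simp [hje, mul_assoc]⟩

lemma len_mul_refl₁_lt_iff {w : W} {z : V₁} (hz : z ∈ D.PhiPos₁) :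
    D.len (w * D.refl₁ z) < D.len w ↔ D.ρ₁ w z ∈ D.PhiNeg₁ := by
  have lt_of_neg : ∀ v : W, D.ρ₁ v z ∈ D.PhiNeg₁ → D.len (v * D.refl₁ z) < D.len v := by
    intro v hneg
    obtain ⟨l, hl, rfl⟩ := D.exists_word_length_eq_len v
    obtain ⟨j, hj, hje⟩ := D.exists_eraseIdx_prod_eq_mul_refl₁ l hz hneg
    calc D.len ((l.map D.r).prod * D.refl₁ z) ≤ (l.eraseIdx j).length := D.len_le _ hje
      _ < D.len (l.map D.r).prod := by rw [List.length_eraseIdx_of_lt hj, ← hl]; omega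
  refine ⟨fun hlt => ?_, lt_of_neg w⟩
  refine (D.mem_PhiPos₁_or_mem_PhiNeg₁ (D.ρ₁_mem_Phi₁ hz.1 w)).resolve_left fun hp => ?_
  have hneg : D.ρ₁ (w * D.refl₁ z) z ∈ D.PhiNeg₁ := by
    rw [ρ₁_mul_apply, D.ρ₁_refl₁_self hz.1, map_neg]
    exact D.neg_mem_PhiNeg₁ hp
  have := lt_of_neg _ hneg
  rw [mul_assoc, D.refl₁_mul_self hz.1, mul_one] at this
  omega

end Length

section Reflections

lemma exists_PhiPos₁_refl₁_eq {t : W} (ht : t ∈ D.T) : ∃ z ∈ D.PhiPos₁, D.refl₁ z = t := by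
  obtain ⟨u, s, rfl⟩ := ht
  rcases D.mem_PhiPos₁_or_mem_PhiNeg₁ (D.ρ₁_mem_Phi₁ (D.α_mem_Phi₁ s) u) with hp | hn
  · exact ⟨_, hp, D.refl₁_eq u s⟩
  · exact ⟨_, D.mem_PhiNeg₁_iff.mp hn, by rw [D.refl₁_neg (D.ρ₁_mem_Phi₁ (D.α_mem_Phi₁ s) u),
      D.refl₁_eq u s]⟩

lemma mul_self_of_mem_T {t : W} (ht : t ∈ D.T) : t * t = 1 := by
  obtain ⟨z, hz, rfl⟩ := D.exists_PhiPos₁_refl₁_eq ht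
  exact D.refl₁_mul_self hz.1

lemma len_pos_of_mem_T {t : W} (ht : t ∈ D.T) : 0 < D.len t := by
  obtain ⟨z, hz, rfl⟩ := D.exists_PhiPos₁_refl₁_eq ht
  exact Nat.pos_of_ne_zero fun h => D.refl₁_ne_one hz.1 (D.eq_one_of_len_eq_zero h)

lemma mem_Nbar_self {t : W} (ht : t ∈ D.T) : t ∈ D.Nbar t :=
  ⟨ht, by rw [D.mul_self_of_mem_T ht, D.len_one]; exact D.len_pos_of_mem_T ht⟩

lemma refl₁_mem_Nbar_iff {w : W} {z : V₁} (hz : z ∈ D.PhiPos₁) :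
    D.refl₁ z ∈ D.Nbar w ↔ D.ρ₁ w z ∈ D.PhiNeg₁ :=
  ⟨fun h => (D.len_mul_refl₁_lt_iff hz).mp h.2,
    fun h => ⟨D.refl₁_mem_T hz.1, (D.len_mul_refl₁_lt_iff hz).mpr h⟩⟩

end Reflections

section Depth

noncomputable def depth (z : V₁) : ℕ :=
  sInf {n | ∃ l : List S, l.length = n ∧ D.ρ₁ (l.map D.r).prod z ∈ D.PhiNeg₁}

lemma depth_le {z : V₁} (l : List S) (h : D.ρ₁ (l.map D.r).prod z ∈ D.PhiNeg₁) :
    D.depth z ≤ l.length :=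
  Nat.sInf_le ⟨l, rfl, h⟩

lemma exists_word_length_eq_depth {z : V₁} (hz : z ∈ D.PhiPos₁) :
    ∃ l : List S, l.length = D.depth z ∧ D.ρ₁ (l.map D.r).prod z ∈ D.PhiNeg₁ := by
  obtain ⟨l, hl⟩ := D.exists_word (D.refl₁ z)
  have hne : {n | ∃ l : List S, l.length = n ∧ D.ρ₁ (l.map D.r).prod z ∈ D.PhiNeg₁}.Nonempty :=
    ⟨l.length, l, rfl, by rw [hl, D.ρ₁_refl₁_self hz.1]; exact D.neg_mem_PhiNeg₁ hz⟩
  exact Nat.sInf_mem hne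

lemma depth_pos {z : V₁} (hz : z ∈ D.PhiPos₁) : 0 < D.depth z := by
  obtain ⟨l, hl, hneg⟩ := D.exists_word_length_eq_depth hz
  refine Nat.pos_of_ne_zero fun h => D.notMem_PhiNeg₁ hz ?_
  rw [h, List.length_eq_zero_iff] at hl
  simpa [hl, ρ₁_one_apply] using hneg

lemma depth_le_depth_ρ₁_r_add_one {z : V₁} (s : S) (hsz : D.ρ₁ (D.r s) z ∈ D.PhiPos₁) :
    D.depth z ≤ D.depth (D.ρ₁ (D.r s) z) + 1 := by
  obtain ⟨l, hl, hneg⟩ := D.exists_word_length_eq_depth hsz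
  calc D.depth z ≤ (l ++ [s]).length := D.depth_le _ (by simpa [ρ₁_mul_apply] using hneg)
    _ = D.depth (D.ρ₁ (D.r s) z) + 1 := by rw [List.length_append, hl, List.length_singleton]

lemma depth_smul {z : V₁} (hz : z ∈ D.PhiPos₁) {c : ℝ} (hcz : c • z ∈ D.PhiPos₁) :
    D.depth (c • z) = D.depth z := by
  have hc := D.pos_of_smul_mem_PhiPos₁ hz hcz
  have key : ∀ l : List S, D.ρ₁ (l.map D.r).prod (c • z) ∈ D.PhiNeg₁ ↔
      D.ρ₁ (l.map D.r).prod z ∈ D.PhiNeg₁ := fun l => by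
    rw [map_smul]
    exact D.smul_mem_PhiNeg₁_iff (D.ρ₁_mem_Phi₁ hz.1 _) hc
      (by rw [← map_smul]; exact D.ρ₁_mem_Phi₁ hcz.1 _)
  simp only [depth, key]

lemma depth_eq_one_of_eq_smul_α {z : V₁} (hz : z ∈ D.PhiPos₁) {c : ℝ} {s : S}
    (h : z = c • D.α s) : D.depth z = 1 := by
  have hα : D.depth (D.α s) ≤ 1 :=
    D.depth_le [s] (by simpa [ρ₁_r_α] using D.neg_mem_PhiNeg₁ (D.α_mem_PhiPos₁ s))
  have := D.depth_pos hz
  rw [h, D.depth_smul (D.α_mem_PhiPos₁ s) (h ▸ hz)] at this ⊢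
  omega

lemma eq_smul_α_or_exists_depth_ρ₁_r_add_one_eq {z : V₁} (hz : z ∈ D.PhiPos₁) :
    (∃ s : S, ∃ c : ℝ, z = c • D.α s) ∨
      2 ≤ D.depth z ∧ ∃ s : S, D.ρ₁ (D.r s) z ∈ D.PhiPos₁ ∧
        D.depth (D.ρ₁ (D.r s) z) + 1 = D.depth z := by
  obtain ⟨l, hl, hneg⟩ := D.exists_word_length_eq_depth hz
  obtain ⟨l₁, s, rfl⟩ : ∃ l₁ s, l = l₁ ++ [s] := by
    rcases List.eq_nil_or_concat l with rfl | ⟨l₁, s, rfl⟩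
    · exact absurd hl.symm (D.depth_pos hz).ne'
    · exact ⟨l₁, s, List.concat_eq_append⟩
  simp only [List.map_append, List.map_singleton, List.prod_append, List.prod_singleton,
    ρ₁_mul_apply] at hneg
  rw [List.length_append, List.length_singleton] at hl
  rcases D.mem_PhiPos₁_or_mem_PhiNeg₁ (D.ρ₁_mem_Phi₁ hz.1 (D.r s)) with hp | hn
  · have h₁ := D.depth_le l₁ hneg
    have h₂ := D.depth_le_depth_ρ₁_r_add_one s hp
    have h₃ := D.depth_pos hp
    exact Or.inr ⟨by omega, s, hp, by omega⟩
  · exact Or.inl ⟨s, D.exists_eq_smul_α_of_ρ₁_r_mem_PhiNeg₁ hz s hn⟩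

lemma depth_lt_or_depth_neg_ρ₁_refl₁_lt {x z : V₁} (hx : x ∈ D.PhiPos₁) (hz : z ∈ D.PhiPos₁)
    (hnp : ∀ c : ℝ, z ≠ c • x) (hinv : D.ρ₁ (D.refl₁ x) z ∈ D.PhiNeg₁) :
    D.depth z < D.depth x ∨ D.depth (-D.ρ₁ (D.refl₁ x) z) < D.depth x := by
  obtain ⟨d, hd⟩ : ∃ d, D.depth x = d := ⟨_, rfl⟩
  induction d using Nat.strong_induction_on generalizing x z with
  | _ d ih =>
  subst hd
  rcases D.eq_smul_α_or_exists_depth_ρ₁_r_add_one_eq hx with ⟨s, c, hxs⟩ | ⟨h2, s, hζ, hζd⟩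
  · exact absurd hinv (D.ρ₁_refl₁_notMem_PhiNeg₁_of_eq_smul_α hx.1 hxs hz hnp)
  set w := -D.ρ₁ (D.refl₁ x) z with hw
  have hwp : w ∈ D.PhiPos₁ := D.mem_PhiNeg₁_iff.mp hinv
  by_cases hzs : ∃ c : ℝ, z = c • D.α s
  · obtain ⟨c, hc⟩ := hzs
    exact Or.inl (by rw [D.depth_eq_one_of_eq_smul_α hz hc]; omega)
  by_cases hws : ∃ c : ℝ, w = c • D.α s
  · obtain ⟨c, hc⟩ := hws
    exact Or.inr (by rw [D.depth_eq_one_of_eq_smul_α hwp hc]; omega)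
  push Not at hzs hws
  have hsz := D.ρ₁_r_mem_PhiPos₁ hz s hzs
  have hsw := D.ρ₁_r_mem_PhiPos₁ hwp s hws
  have hact : D.ρ₁ (D.refl₁ (D.ρ₁ (D.r s) x)) (D.ρ₁ (D.r s) z) = -D.ρ₁ (D.r s) w := by
    rw [D.ρ₁_refl₁_ρ₁_apply hx.1, hw, map_neg, neg_neg]
  have hinv' : D.ρ₁ (D.refl₁ (D.ρ₁ (D.r s) x)) (D.ρ₁ (D.r s) z) ∈ D.PhiNeg₁ := by
    rw [hact]; exact D.neg_mem_PhiNeg₁ hsw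
  rcases ih _ (by omega) hζ hsz (D.ρ₁_ne_smul hnp _) hinv' rfl with h | h
  · exact Or.inl (by linarith [D.depth_le_depth_ρ₁_r_add_one s hsz])
  · rw [hact, neg_neg] at h
    exact Or.inr (by linarith [D.depth_le_depth_ρ₁_r_add_one s hsw])

lemma depth_ρ₁_r_ρ₁_refl₁_lt_of_refl₁_eq {x y : V₁} {s : S} (hx : x ∈ D.PhiPos₁)
    (hζ : D.ρ₁ (D.r s) x ∈ D.PhiPos₁) (hζx : D.depth (D.ρ₁ (D.r s) x) < D.depth x)
    (hry : D.refl₁ y = D.refl₁ x * D.r s * D.refl₁ x)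
    (hsb : D.ρ₁ (D.r s) (D.ρ₁ (D.refl₁ y) x) ∈ D.PhiPos₁) :
    D.depth (D.ρ₁ (D.r s) (D.ρ₁ (D.refl₁ y) x)) < D.depth (D.ρ₁ (D.r s) x) := by
  have hact : D.ρ₁ (D.refl₁ (D.ρ₁ (D.r s) x)) x = -D.ρ₁ (D.r s) (D.ρ₁ (D.refl₁ y) x) := by
    rw [hry, D.refl₁_ρ₁ hx.1, D.r_inv]
    simp only [ρ₁_mul_apply, D.ρ₁_refl₁_self hx.1, map_neg, neg_neg]
  have hxζ : ∀ c : ℝ, x ≠ c • D.ρ₁ (D.r s) x := fun c h => by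
    have := D.depth_smul hζ (h ▸ hx)
    rw [← h] at this
    omega
  rcases D.depth_lt_or_depth_neg_ρ₁_refl₁_lt hζ hx hxζ
    (by rw [hact]; exact D.neg_mem_PhiNeg₁ hsb) with h | h
  · omega
  · rwa [hact, neg_neg] at h

lemma depth_ρ₁_refl₁_lt {x y : V₁} (hx : x ∈ D.PhiPos₁) (hy : y ∈ D.PhiPos₁)
    (hnp : ∀ c : ℝ, y ≠ c • x) (hinv : D.ρ₁ (D.refl₁ x) y ∈ D.PhiNeg₁)
    (hpos : D.ρ₁ (D.refl₁ y) x ∈ D.PhiPos₁) : D.depth (D.ρ₁ (D.refl₁ y) x) < D.depth x := by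
  obtain ⟨d, hd⟩ : ∃ d, D.depth x = d := ⟨_, rfl⟩
  induction d using Nat.strong_induction_on generalizing x y with
  | _ d ih =>
  subst hd
  rcases D.eq_smul_α_or_exists_depth_ρ₁_r_add_one_eq hx with ⟨s, c, hxs⟩ | ⟨h2, s, hζ, hζd⟩
  · exact absurd hinv (D.ρ₁_refl₁_notMem_PhiNeg₁_of_eq_smul_α hx.1 hxs hy hnp)
  set ζ := D.ρ₁ (D.r s) x with hζ_def
  set η := -D.ρ₁ (D.refl₁ x) y with hη_def
  have hηp : η ∈ D.PhiPos₁ := D.mem_PhiNeg₁_iff.mp hinv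
  by_cases hys : ∃ c : ℝ, y = c • D.α s
  · obtain ⟨c, hc⟩ := hys
    rw [D.refl₁_eq_r_of_eq_smul_α hy.1 hc, ← hζ_def]
    omega
  by_cases hbs : ∃ c : ℝ, D.ρ₁ (D.refl₁ y) x = c • D.α s
  · obtain ⟨c, hc⟩ := hbs
    rw [D.depth_eq_one_of_eq_smul_α hpos hc]
    omega
  push Not at hys hbs
  have hsb := D.ρ₁_r_mem_PhiPos₁ hpos s hbs
  suffices h : D.depth (D.ρ₁ (D.r s) (D.ρ₁ (D.refl₁ y) x)) < D.depth ζ by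
    linarith [D.depth_le_depth_ρ₁_r_add_one s hsb]
  by_cases hηs : ∃ c : ℝ, η = c • D.α s
  · obtain ⟨c, hc⟩ := hηs
    have hry : D.refl₁ y = D.refl₁ x * D.r s * D.refl₁ x := by
      rw [← D.refl₁_eq_r_of_eq_smul_α hηp.1 hc, hη_def, D.refl₁_neg (D.ρ₁_mem_Phi₁ hy.1 _),
        D.refl₁_ρ₁ hy.1, D.refl₁_inv hx.1, ← mul_assoc, ← mul_assoc, D.refl₁_mul_self hx.1,
        one_mul, mul_assoc, D.refl₁_mul_self hx.1, mul_one]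
    exact D.depth_ρ₁_r_ρ₁_refl₁_lt_of_refl₁_eq hx hζ (by rw [← hζ_def]; omega) hry hsb
  · push Not at hηs
    have hsy := D.ρ₁_r_mem_PhiPos₁ hy s hys
    have hb : D.ρ₁ (D.refl₁ (D.ρ₁ (D.r s) y)) ζ = D.ρ₁ (D.r s) (D.ρ₁ (D.refl₁ y) x) :=
      D.ρ₁_refl₁_ρ₁_apply hy.1 _ _
    have hinv' : D.ρ₁ (D.refl₁ ζ) (D.ρ₁ (D.r s) y) ∈ D.PhiNeg₁ := by
      rw [D.ρ₁_refl₁_ρ₁_apply hx.1, ← neg_neg (D.ρ₁ (D.refl₁ x) y), ← hη_def, map_neg]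
      exact D.neg_mem_PhiNeg₁ (D.ρ₁_r_mem_PhiPos₁ hηp s hηs)
    have := ih _ (by omega) hζ hsy (D.ρ₁_ne_smul hnp _) hinv' (hb ▸ hsb) rfl
    rwa [hb] at this

end Depth

section CanonicalGenerators

variable {W' : Subgroup W}

lemma mem_of_mem_SW {t : W} (ht : t ∈ D.SW W') : t ∈ W' := by
  have h : t ∈ D.Nbar t ∩ (W' : Set W) := by rw [ht.2]; rfl
  exact h.2

lemma mem_T_of_mem_SW {t : W} (ht : t ∈ D.SW W') : t ∈ D.T := ht.1

lemma ρ₁_refl₁_mem_PhiPos₁_of_mem_SW {x z : V₁} (hx : x ∈ D.PhiPos₁)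
    (hxS : D.refl₁ x ∈ D.SW W') (hz : z ∈ D.PhiPos₁) (hzW : D.refl₁ z ∈ W')
    (hnp : ∀ c : ℝ, z ≠ c • x) : D.ρ₁ (D.refl₁ x) z ∈ D.PhiPos₁ := by
  refine (D.mem_PhiPos₁_or_mem_PhiNeg₁ (D.ρ₁_mem_Phi₁ hz.1 _)).resolve_right fun hn => ?_
  have hmem : D.refl₁ z ∈ D.Nbar (D.refl₁ x) ∩ (W' : Set W) :=
    ⟨(D.refl₁_mem_Nbar_iff hz).mpr hn, hzW⟩
  rw [hxS.2] at hmem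
  obtain ⟨c, hc⟩ := D.exists_eq_smul_of_refl₁_eq hz.1 hx.1 hmem
  exact hnp c hc

lemma exists_depth_lt_of_notMem_SW {x : V₁} (hx : x ∈ D.PhiPos₁) (hxW : D.refl₁ x ∈ W')
    (hxS : D.refl₁ x ∉ D.SW W') :
    ∃ y ∈ D.PhiPos₁, D.refl₁ y ∈ W' ∧ D.ρ₁ (D.refl₁ x) y ∈ D.PhiNeg₁ ∧
      (∀ c : ℝ, y ≠ c • x) ∧ D.depth y < D.depth x := by
  have hT := D.refl₁_mem_T hx.1
  obtain ⟨t, ⟨htN, htW⟩, htx⟩ : ∃ t ∈ D.Nbar (D.refl₁ x) ∩ (W' : Set W), t ≠ D.refl₁ x := by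
    by_contra! h
    exact hxS ⟨hT, Set.eq_singleton_iff_unique_mem.mpr ⟨⟨D.mem_Nbar_self hT, hxW⟩, h⟩⟩
  obtain ⟨y, hy, rfl⟩ := D.exists_PhiPos₁_refl₁_eq htN.1
  have hinv := (D.refl₁_mem_Nbar_iff hy).mp htN
  have hnp : ∀ c : ℝ, y ≠ c • x := fun c h => htx (by rw [h, D.refl₁_smul hx.1 (h ▸ hy.1)])
  rcases D.depth_lt_or_depth_neg_ρ₁_refl₁_lt hx hy hnp hinv with h | h
  · exact ⟨y, hy, htW, hinv, hnp, h⟩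
  refine ⟨_, D.mem_PhiNeg₁_iff.mp hinv, ?_, ?_, fun c h' => hnp c ?_, h⟩
  · rw [D.refl₁_neg (D.ρ₁_mem_Phi₁ hy.1 _)]
    exact D.refl₁_mem_of_mem hy.1 hxW htW
  · rw [map_neg, D.ρ₁_refl₁_ρ₁_refl₁ hx.1]
    exact D.neg_mem_PhiNeg₁ hy
  · have := congrArg (D.ρ₁ (D.refl₁ x)) h'
    rwa [map_neg, D.ρ₁_refl₁_ρ₁_refl₁ hx.1, map_smul, D.ρ₁_refl₁_self hx.1, smul_neg,
      neg_inj] at this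

lemma exists_depth_lt_refl₁_eq_conj {x y : V₁} (hx : x ∈ D.PhiPos₁) (hy : y ∈ D.PhiPos₁)
    (hnp : ∀ c : ℝ, y ≠ c • x) (hinv : D.ρ₁ (D.refl₁ x) y ∈ D.PhiNeg₁)
    (hyx : D.depth y < D.depth x) :
    ∃ x' ∈ D.PhiPos₁, D.depth x' < D.depth x ∧
      D.refl₁ x' = D.refl₁ y * D.refl₁ x * D.refl₁ y := by
  have hconj : D.refl₁ (D.ρ₁ (D.refl₁ y) x) = D.refl₁ y * D.refl₁ x * D.refl₁ y := by
    rw [D.refl₁_ρ₁ hx.1, D.refl₁_inv hy.1]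
  rcases D.mem_PhiPos₁_or_mem_PhiNeg₁ (D.ρ₁_mem_Phi₁ hx.1 (D.refl₁ y)) with hp | hn
  · exact ⟨_, hp, D.depth_ρ₁_refl₁_lt hx hy hnp hinv hp, hconj⟩
  have hxy : ∀ c : ℝ, x ≠ c • y := fun c h => by
    have hc : c ≠ 0 := by
      rintro rfl
      exact D.ne_zero_of_mem_Phi₁ hx.1 (by rw [h, zero_smul])
    exact hnp c⁻¹ (by rw [h, smul_smul, inv_mul_cancel₀ hc, one_smul])
  rcases D.depth_lt_or_depth_neg_ρ₁_refl₁_lt hy hx hxy hn with h | h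
  · omega
  · exact ⟨_, D.mem_PhiNeg₁_iff.mp hn, by omega,
      by rw [D.refl₁_neg (D.ρ₁_mem_Phi₁ hx.1 _), hconj]⟩

/-- Dyer's generation theorem for reflections. If `r_x ∉ S(W')`, then `r_x = r_y r_{x'} r_y`
with `r_y, r_{x'} ∈ W'` and `y, x'` shallower than `x`. -/
lemma exists_SW_word_eq_refl₁ {x : V₁} (hx : x ∈ D.PhiPos₁) (hxW : D.refl₁ x ∈ W') :
    ∃ l : List W, (∀ q ∈ l, q ∈ D.SW W') ∧ l.prod = D.refl₁ x := by
  obtain ⟨d, hd⟩ : ∃ d, D.depth x = d := ⟨_, rfl⟩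
  induction d using Nat.strong_induction_on generalizing x with
  | _ d ih =>
  subst hd
  by_cases hxS : D.refl₁ x ∈ D.SW W'
  · exact ⟨[D.refl₁ x], by simpa using hxS, List.prod_singleton⟩
  obtain ⟨y, hy, hyW, hinv, hnp, hyx⟩ := D.exists_depth_lt_of_notMem_SW hx hxW hxS
  obtain ⟨x', hx', hx'x, hconj⟩ := D.exists_depth_lt_refl₁_eq_conj hx hy hnp hinv hyx
  obtain ⟨l₁, hl₁, hp₁⟩ := ih _ hyx hy hyW rfl
  obtain ⟨l₂, hl₂, hp₂⟩ := ih _ hx'x hx' (hconj ▸ W'.mul_mem (W'.mul_mem hyW hxW) hyW) rfl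
  refine ⟨l₁ ++ l₂ ++ l₁, fun q hq => ?_, ?_⟩
  · simp only [List.mem_append] at hq
    rcases hq with (hq | hq) | hq
    exacts [hl₁ q hq, hl₂ q hq, hl₁ q hq]
  · rw [List.prod_append, List.prod_append, hp₁, hp₂, hconj,
      show ∀ a b : W, a * (a * b * a) * a = (a * a) * b * (a * a) by intros; group,
      D.refl₁_mul_self hy.1, one_mul, mul_one]

lemma exists_SW_word {w : W} (hW' : D.IsReflectionSubgroup W') (hw : w ∈ W') :
    ∃ l : List W, (∀ q ∈ l, q ∈ D.SW W') ∧ l.prod = w := by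
  rw [IsReflectionSubgroup] at hW'
  rw [hW'] at hw
  induction hw using Subgroup.closure_induction with
  | mem t ht =>
    obtain ⟨z, hz, rfl⟩ := D.exists_PhiPos₁_refl₁_eq ht.2
    exact D.exists_SW_word_eq_refl₁ hz ht.1
  | one => exact ⟨[], by simp, rfl⟩
  | mul a b _ _ ha hb =>
    obtain ⟨l₁, h₁, rfl⟩ := ha
    obtain ⟨l₂, h₂, rfl⟩ := hb
    exact ⟨l₁ ++ l₂, fun q hq => (List.mem_append.mp hq).elim (h₁ q) (h₂ q), List.prod_append⟩
  | inv a _ ha =>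
    obtain ⟨l, hl, rfl⟩ := ha
    refine ⟨l.reverse, fun q hq => hl q (List.mem_reverse.mp hq), ?_⟩
    rw [List.prod_inv_reverse, List.map_congr_left fun q hq =>
      inv_eq_of_mul_eq_one_right (D.mul_self_of_mem_T (D.mem_T_of_mem_SW (hl q hq))), List.map_id']

lemma lenIn_le {w : W} (l : List W) (hl : ∀ q ∈ l, q ∈ D.SW W') (hw : l.prod = w) :
    D.lenIn W' w ≤ l.length :=
  Nat.sInf_le ⟨l, rfl, hl, hw⟩

lemma exists_SW_word_length_eq_lenIn {w : W}
    (h : ∃ l : List W, (∀ q ∈ l, q ∈ D.SW W') ∧ l.prod = w) :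
    ∃ l : List W, l.length = D.lenIn W' w ∧ (∀ q ∈ l, q ∈ D.SW W') ∧ l.prod = w := by
  obtain ⟨l, hl, hw⟩ := h
  have hne : {n | ∃ l : List W, l.length = n ∧ (∀ t ∈ l, t ∈ D.SW W') ∧ l.prod = w}.Nonempty :=
    ⟨l.length, l, rfl, hl, hw⟩
  exact Nat.sInf_mem hne

/-- The exchange condition relative to `S(W')`. -/
lemma exists_SW_word_prod_eq_mul_refl₁ (l : List W) (hl : ∀ q ∈ l, q ∈ D.SW W') {z : V₁}
    (hz : z ∈ D.PhiPos₁) (hzW : D.refl₁ z ∈ W') (hneg : D.ρ₁ l.prod z ∈ D.PhiNeg₁) :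
    ∃ l' : List W, (∀ q ∈ l', q ∈ D.SW W') ∧ l'.length + 1 = l.length ∧
      l'.prod = l.prod * D.refl₁ z := by
  induction l with
  | nil =>
    rw [List.prod_nil, ρ₁_one_apply] at hneg
    exact absurd hneg (D.notMem_PhiNeg₁ hz)
  | cons q l ih =>
    have hq := hl q List.mem_cons_self
    have hl' : ∀ p ∈ l, p ∈ D.SW W' := fun p hp => hl p (List.mem_cons_of_mem _ hp)
    rw [List.prod_cons, ρ₁_mul_apply] at hneg
    rcases D.mem_PhiPos₁_or_mem_PhiNeg₁ (D.ρ₁_mem_Phi₁ hz.1 l.prod) with hp | hn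
    · obtain ⟨x, hx, rfl⟩ := D.exists_PhiPos₁_refl₁_eq (D.mem_T_of_mem_SW hq)
      have hzW' : D.refl₁ (D.ρ₁ l.prod z) ∈ W' :=
        D.refl₁_mem_of_mem hz.1 (W'.list_prod_mem fun p hp => D.mem_of_mem_SW (hl' p hp)) hzW
      obtain ⟨c, hc⟩ : ∃ c : ℝ, D.ρ₁ l.prod z = c • x := by
        by_contra! hnp
        exact D.notMem_PhiNeg₁ (D.ρ₁_refl₁_mem_PhiPos₁_of_mem_SW hx hq hp hzW' hnp) hneg
      have hrefl : l.prod * D.refl₁ z * (l.prod)⁻¹ = D.refl₁ x := by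
        rw [← D.refl₁_ρ₁ hz.1, hc, D.refl₁_smul hx.1 (hc ▸ D.ρ₁_mem_Phi₁ hz.1 _)]
      refine ⟨l, hl', by simp, ?_⟩
      rw [List.prod_cons, show D.refl₁ x * l.prod * D.refl₁ z =
        D.refl₁ x * (l.prod * D.refl₁ z * (l.prod)⁻¹) * l.prod by group, hrefl,
        D.refl₁_mul_self hx.1, one_mul]
    · obtain ⟨l', hl'', hlen, hprod⟩ := ih hl' hn
      refine ⟨q :: l', fun p hp => ?_, by simpa using hlen, by
        rw [List.prod_cons, List.prod_cons, hprod, mul_assoc]⟩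
      rcases List.mem_cons.mp hp with rfl | hp
      exacts [hq, hl'' p hp]

lemma lenIn_eq_length_of_lenIn_mul_eq (l : List W) (hl : ∀ q ∈ l, q ∈ D.SW W') {q : W}
    (hq : q ∈ D.SW W') (h : D.lenIn W' (l.prod * q) = l.length + 1) :
    D.lenIn W' l.prod = l.length := by
  refine le_antisymm (D.lenIn_le l hl rfl) ?_
  obtain ⟨l', hlen, hl', hprod⟩ := D.exists_SW_word_length_eq_lenIn ⟨l, hl, rfl⟩
  have := D.lenIn_le (l' ++ [q])
    (fun p hp => (List.mem_append.mp hp).elim (hl' p) (fun h => List.mem_singleton.mp h ▸ hq))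
    (by rw [List.prod_append, List.prod_singleton, hprod])
  rw [List.length_append, List.length_singleton, h] at this
  omega

lemma ρ₁_mem_PhiPos₁_of_lenIn_mul_refl₁_eq (l : List W) (hl : ∀ q ∈ l, q ∈ D.SW W') {x : V₁}
    (hx : x ∈ D.PhiPos₁) (hxW : D.refl₁ x ∈ W')
    (h : D.lenIn W' (l.prod * D.refl₁ x) = l.length + 1) : D.ρ₁ l.prod x ∈ D.PhiPos₁ := by
  refine (D.mem_PhiPos₁_or_mem_PhiNeg₁ (D.ρ₁_mem_Phi₁ hx.1 _)).resolve_right fun hn => ?_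
  obtain ⟨l', hl', hlen, hprod⟩ := D.exists_SW_word_prod_eq_mul_refl₁ l hl hx hxW hn
  have := D.lenIn_le l' hl' hprod
  omega

end CanonicalGenerators

section Inversions

variable (W' : Subgroup W)

/-- `N₁(w) ∩ Φ̂₁(W')`. -/
def relInversions (w : W) : Set (Set V₁) := D.N₁ w ∩ rayClasses (D.PhiSub₁ W')

/-- The classes `ŷ_j` of the roots `y_j = (r_{x_n} ⋯ r_{x_{j+1}}) x_j` attached to the word
`r_{x_1} ⋯ r_{x_n}`. -/
def inversionClasses {n : ℕ} (x : Fin n → V₁) (j : Fin n) : Set V₁ :=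
  rayClass (D.ρ₁ (((List.ofFn fun k => D.refl₁ (x k)).drop ((j : ℕ) + 1)).reverse.prod) (x j))

variable {W'}

lemma mem_relInversions_iff {w : W} {C : Set V₁} :
    C ∈ D.relInversions W' w ↔
      ∃ z ∈ D.PhiPos₁, D.refl₁ z ∈ W' ∧ D.ρ₁ w z ∈ D.PhiNeg₁ ∧ C = rayClass z := by
  constructor
  · rintro ⟨⟨z, hz, hzn, rfl⟩, ⟨z', ⟨hz', hz'W⟩, hC⟩⟩
    obtain ⟨c, -, hc⟩ := exists_eq_smul_of_rayClass_eq hC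
    exact ⟨z, hz, by rwa [hc, D.refl₁_smul hz' (hc ▸ hz.1)], hzn, rfl⟩
  · rintro ⟨z, hz, hzW, hzn, rfl⟩
    exact ⟨⟨z, hz, hzn, rfl⟩, z, ⟨hz.1, hzW⟩, rfl⟩

lemma relInversions_one : D.relInversions W' 1 = ∅ :=
  Set.eq_empty_of_forall_notMem fun C hC => by
    obtain ⟨z, hz, -, hzn, -⟩ := D.mem_relInversions_iff.mp hC
    rw [ρ₁_one_apply] at hzn
    exact D.notMem_PhiNeg₁ hz hzn

lemma rayClass_notMem_relInversions {u : W} {x : V₁} (hx : x ∈ D.PhiPos₁)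
    (hux : D.ρ₁ u x ∈ D.PhiPos₁) : rayClass x ∉ D.relInversions W' u := by
  intro hC
  obtain ⟨z, hz, -, hzn, hC⟩ := D.mem_relInversions_iff.mp hC
  obtain ⟨c, -, rfl⟩ := exists_eq_smul_of_rayClass_eq hC
  have hc := D.pos_of_smul_mem_PhiPos₁ hz hx
  rw [map_smul] at hux
  exact D.notMem_PhiNeg₁ hux
    ((D.smul_mem_PhiNeg₁_iff (D.ρ₁_mem_Phi₁ hz.1 u) hc (map_smul (D.ρ₁ u) c z ▸
      D.ρ₁_mem_Phi₁ hx.1 u)).mpr hzn)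

lemma relInversions_mul_refl₁ {u : W} {x : V₁} (hx : x ∈ D.PhiPos₁) (hxS : D.refl₁ x ∈ D.SW W')
    (hux : D.ρ₁ u x ∈ D.PhiPos₁) :
    D.relInversions W' (u * D.refl₁ x) =
      insert (rayClass x) ((D.ρ₁ (D.refl₁ x) '' ·) '' D.relInversions W' u) := by
  have hxW := D.mem_of_mem_SW hxS
  ext C
  simp only [Set.mem_insert_iff, Set.mem_image, D.mem_relInversions_iff, ρ₁_mul_apply]
  constructor
  · rintro ⟨z, hz, hzW, hzn, rfl⟩
    by_cases hzx : ∃ c : ℝ, z = c • x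
    · obtain ⟨c, rfl⟩ := hzx
      exact Or.inl (rayClass_smul (fun hc => D.ne_zero_of_mem_Phi₁ hz.1 (by simp [hc])) x)
    push Not at hzx
    refine Or.inr ⟨_, ⟨_, D.ρ₁_refl₁_mem_PhiPos₁_of_mem_SW hx hxS hz hzW hzx,
      D.refl₁_mem_of_mem hz.1 hxW hzW, hzn, rfl⟩, ?_⟩
    rw [LinearMap.image_rayClass, D.ρ₁_refl₁_ρ₁_refl₁ hx.1]
  · rintro (rfl | ⟨_, ⟨z, hz, hzW, hzn, rfl⟩, rfl⟩)
    · refine ⟨x, hx, hxW, ?_, rfl⟩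
      rw [D.ρ₁_refl₁_self hx.1, map_neg]
      exact D.neg_mem_PhiNeg₁ hux
    · have hzx : ∀ c : ℝ, z ≠ c • x := by
        rintro c rfl
        have hc : c ≠ 0 := fun hc => D.ne_zero_of_mem_Phi₁ hz.1 (by simp [hc])
        exact D.rayClass_notMem_relInversions hx hux
          (D.mem_relInversions_iff.mpr ⟨_, hz, hzW, hzn, (rayClass_smul hc x).symm⟩)
      refine ⟨_, D.ρ₁_refl₁_mem_PhiPos₁_of_mem_SW hx hxS hz hzW hzx,
        D.refl₁_mem_of_mem hz.1 hxW hzW, ?_, LinearMap.image_rayClass _ _⟩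
      rwa [D.ρ₁_refl₁_ρ₁_refl₁ hx.1]

lemma ofFn_refl₁_snoc {n : ℕ} (x : Fin n → V₁) (x₀ : V₁) :
    (List.ofFn fun k => D.refl₁ (Fin.snoc (α := fun _ => V₁) x x₀ k)) =
      (List.ofFn fun k => D.refl₁ (x k)) ++ [D.refl₁ x₀] := by
  rw [List.ofFn_succ']
  simp

lemma inversionClasses_snoc {n : ℕ} (x : Fin n → V₁) (x₀ : V₁) :
    D.inversionClasses (Fin.snoc (α := fun _ => V₁) x x₀) =
      Fin.snoc (fun j => D.ρ₁ (D.refl₁ x₀) '' D.inversionClasses x j) (rayClass x₀) := by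
  funext j
  simp only [inversionClasses, ofFn_refl₁_snoc]
  induction j using Fin.lastCases with
  | last =>
    rw [List.drop_eq_nil_of_le (by simp)]
    simp
  | cast j =>
    rw [List.drop_append_of_le_length (by simp)]
    simp [LinearMap.image_rayClass]

theorem relInversions_eq_range_inversionClasses {n : ℕ} (x : Fin n → V₁)
    (hx : ∀ j, x j ∈ D.Delta₁ W')
    (hn : n = D.lenIn W' (List.ofFn fun j => D.refl₁ (x j)).prod) :
    D.relInversions W' (List.ofFn fun j => D.refl₁ (x j)).prod =
      Set.range (D.inversionClasses x) ∧ Function.Injective (D.inversionClasses x) := by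
  induction x using Fin.snocInduction with
  | elim0 => exact ⟨by simp [relInversions_one], fun j => j.elim0⟩
  | @snoc n x x₀ ih =>
    have hx₀ : x₀ ∈ D.Delta₁ W' := by simpa using hx (Fin.last n)
    set l := List.ofFn fun k => D.refl₁ (x k)
    have hl : ∀ q ∈ l, q ∈ D.SW W' := by
      simp only [l, List.mem_ofFn, forall_exists_index, forall_apply_eq_imp_iff]
      exact fun k => by simpa using (hx k.castSucc).2
    rw [D.ofFn_refl₁_snoc, List.prod_append, List.prod_singleton] at hn ⊢
    have hlen : D.lenIn W' (l.prod * D.refl₁ x₀) = l.length + 1 := by simp [l, hn]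
    have hux := D.ρ₁_mem_PhiPos₁_of_lenIn_mul_refl₁_eq l hl hx₀.1 (D.mem_of_mem_SW hx₀.2) hlen
    obtain ⟨hrange, hinj⟩ := ih (fun k => by simpa using hx k.castSucc)
      (by simpa [l] using (D.lenIn_eq_length_of_lenIn_mul_eq l hl hx₀.2 hlen).symm)
    set f : Set V₁ → Set V₁ := (D.ρ₁ (D.refl₁ x₀) '' ·)
    have hf : Function.Injective f := Set.image_injective.mpr (D.ρ₁_injective _)
    have hfx₀ : f (rayClass x₀) = rayClass x₀ := by
      show D.ρ₁ _ '' _ = _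
      rw [LinearMap.image_rayClass, D.ρ₁_refl₁_self hx₀.1.1, rayClass_neg]
    rw [D.relInversions_mul_refl₁ hx₀.1 hx₀.2 hux, inversionClasses_snoc, hrange, Fin.range_snoc,
      ← Set.range_comp']
    refine ⟨rfl, Fin.snoc_injective_of_injective (hf.comp hinj) ?_⟩
    rintro ⟨j, hj⟩
    rw [← hfx₀] at hj
    exact D.rayClass_notMem_relInversions hx₀.1 hux (hrange ▸ ⟨j, hf hj⟩ :
      rayClass x₀ ∈ D.relInversions W' l.prod)

lemma exists_Delta₁_ofFn_eq (l : List W) (hl : ∀ q ∈ l, q ∈ D.SW W') :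
    ∃ x : Fin l.length → V₁, (∀ j, x j ∈ D.Delta₁ W') ∧
      (List.ofFn fun j => D.refl₁ (x j)) = l := by
  have h : ∀ j : Fin l.length, ∃ z ∈ D.PhiPos₁, D.refl₁ z = l.get j :=
    fun j => D.exists_PhiPos₁_refl₁_eq (D.mem_T_of_mem_SW (hl _ (List.get_mem l j)))
  choose x hx hxl using h
  refine ⟨x, fun j => ⟨hx j, (hxl j).symm ▸ hl _ (List.get_mem l j)⟩, ?_⟩
  simp only [hxl]
  exact List.ofFn_get l

theorem N₁_inter_rayClasses_PhiSub₁_description (hW' : D.IsReflectionSubgroup W') {w : W}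
    (hw : w ∈ W') :
    (D.N₁ w ∩ rayClasses (D.PhiSub₁ W')).Finite ∧
      (D.N₁ w ∩ rayClasses (D.PhiSub₁ W')).ncard = D.lenIn W' w ∧
      ∀ (n : ℕ) (x : Fin n → V₁), (∀ j, x j ∈ D.Delta₁ W') →
        (List.ofFn fun j => D.refl₁ (x j)).prod = w → n = D.lenIn W' w →
        (D.N₁ w ∩ rayClasses (D.PhiSub₁ W') =
          { C | ∃ j : Fin n, C = rayClass (D.ρ₁
              (((List.ofFn fun k => D.refl₁ (x k)).drop ((j : ℕ) + 1)).reverse.prod)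
              (x j)) }) ∧
        Function.Injective (fun j : Fin n => rayClass (D.ρ₁
            (((List.ofFn fun k => D.refl₁ (x k)).drop ((j : ℕ) + 1)).reverse.prod)
            (x j))) := by
  obtain ⟨l, hlen, hl, rfl⟩ := D.exists_SW_word_length_eq_lenIn (D.exists_SW_word hW' hw)
  obtain ⟨x, hx, hxl⟩ := D.exists_Delta₁_ofFn_eq l hl
  obtain ⟨hrange, hinj⟩ :=
    D.relInversions_eq_range_inversionClasses x hx (by rw [hxl]; exact hlen)
  rw [hxl, relInversions] at hrange
  refine ⟨hrange ▸ Set.finite_range _, ?_, fun n y hy hprod hn => ?_⟩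
  · rw [hrange, Set.ncard_range_of_injective hinj, Nat.card_eq_fintype_card, Fintype.card_fin,
      hlen]
  · obtain ⟨hrange', hinj'⟩ :=
      D.relInversions_eq_range_inversionClasses y hy (by rw [hprod]; exact hn)
    rw [hprod] at hrange'
    refine ⟨hrange'.trans ?_, hinj'⟩
    ext C
    exact ⟨fun ⟨j, hj⟩ => ⟨j, hj.symm⟩, fun ⟨j, hj⟩ => ⟨j, hj.symm⟩⟩

end Inversions

noncomputable def dual : CoxeterDatum S V₂ V₁ W where
  pair := D.pair.flip
  α := D.β
  β := D.α
  α_inj := D.β_inj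
  β_inj := D.α_inj
  D1 := D.D1
  D2a := D.D2b
  D2b := D.D2a
  D2c := D.D2d
  D2d := D.D2c
  D3 := fun s t h => D.D3 t s h.symm
  D4 := fun s t h => D.D4 t s h
  D5 := fun s t h => by simpa [mul_comm] using D.D5 s t h
  r := D.r
  r_gen := D.r_gen
  r_ne_one := D.r_ne_one
  r_sq := D.r_sq
  ρ₁ := D.ρ₂
  ρ₂ := D.ρ₁
  ρ₁_inj := D.ρ₂_inj
  ρ₂_inj := D.ρ₁_inj
  hr₁ := D.hr₂
  hr₂ := D.hr₁
  pair_inv := fun w x y => D.pair_inv w y x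
  phi := D.phiInv
  phiInv := D.phi
  refl₁ := D.refl₂
  refl₂ := D.refl₁
  decomp₁ := D.decomp₂
  disj₁ := D.disj₂
  decomp₂ := D.decomp₁
  disj₂ := D.disj₁
  phi_mem := D.phiInv_mem
  phiInv_mem := D.phi_mem
  phiInv_phi := D.phi_phiInv
  phi_phiInv := D.phiInv_phi
  phi_simple := fun s => by
    simpa [D.phi_simple] using D.phiInv_phi (D.α s) (D.α_mem_Phi₁ s)
  phi_equiv := fun w _ hy => D.phiInv_ρ₂ w hy
  refl₁_eq := D.refl₂_eq
  refl₂_eq := D.refl₁_eq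
  refl₁_act := fun y hy v => by simpa using D.refl₂_act y hy v
  refl₂_act := fun x hx v => by simpa using D.refl₁_act x hx v

end CoxeterDatum

/-- Let `W'` be a reflection subgroup of `W`, `i ∈ {1,2}`, and
`w ∈ W'`.  Then `Nᵢ(w) ∩ Φ̂ᵢ(W')` is finite of cardinality exactly `ℓ_{W'}(w)`;
moreover if `w = r_{x_1} ⋯ r_{x_n}` is reduced with respect to `S(W')` (with each
`x_j ∈ Δᵢ(W')`), then `Nᵢ(w) ∩ Φ̂ᵢ(W') = {ŷ_1, …, ŷ_n}` where
`y_j = (r_{x_n} ⋯ r_{x_{j+1}}) x_j`, and the classes `ŷ_1, …, ŷ_n` are pairwise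
distinct. -/
theorem stmt15 {S V₁ V₂ W : Type*} [AddCommGroup V₁] [Module ℝ V₁]
    [AddCommGroup V₂] [Module ℝ V₂] [Group W]
    (D : CoxeterDatum S V₁ V₂ W)
    (W' : Subgroup W) (hW' : D.IsReflectionSubgroup W') (w : W) (hw : w ∈ W') :
    ((D.N₁ w ∩ rayClasses (D.PhiSub₁ W')).Finite ∧
      (D.N₁ w ∩ rayClasses (D.PhiSub₁ W')).ncard = D.lenIn W' w ∧
      ∀ (n : ℕ) (x : Fin n → V₁), (∀ j, x j ∈ D.Delta₁ W') →
        (List.ofFn fun j => D.refl₁ (x j)).prod = w → n = D.lenIn W' w →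
        (D.N₁ w ∩ rayClasses (D.PhiSub₁ W') =
          { C | ∃ j : Fin n, C = rayClass (D.ρ₁
              (((List.ofFn fun k => D.refl₁ (x k)).drop ((j : ℕ) + 1)).reverse.prod)
              (x j)) }) ∧
        Function.Injective (fun j : Fin n => rayClass (D.ρ₁
            (((List.ofFn fun k => D.refl₁ (x k)).drop ((j : ℕ) + 1)).reverse.prod)
            (x j)))) ∧
    ((D.N₂ w ∩ rayClasses (D.PhiSub₂ W')).Finite ∧
      (D.N₂ w ∩ rayClasses (D.PhiSub₂ W')).ncard = D.lenIn W' w ∧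
      ∀ (n : ℕ) (y : Fin n → V₂), (∀ j, y j ∈ D.Delta₂ W') →
        (List.ofFn fun j => D.refl₂ (y j)).prod = w → n = D.lenIn W' w →
        (D.N₂ w ∩ rayClasses (D.PhiSub₂ W') =
          { C | ∃ j : Fin n, C = rayClass (D.ρ₂
              (((List.ofFn fun k => D.refl₂ (y k)).drop ((j : ℕ) + 1)).reverse.prod)
              (y j)) }) ∧
        Function.Injective (fun j : Fin n => rayClass (D.ρ₂
            (((List.ofFn fun k => D.refl₂ (y k)).drop ((j : ℕ) + 1)).reverse.prod)
            (y j)))) :=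
  ⟨D.N₁_inter_rayClasses_PhiSub₁_description hW' hw,
    D.dual.N₁_inter_rayClasses_PhiSub₁_description hW' hw⟩
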